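/- For every closed expression e, the lazy Krivine machine LK and its pointer-refined counterpart LK* (with store-allocated continuations) operate in lock-step: the reachable state sets are isomorphic under the map that recursively dereferences continuation addresses through the store. -/

import Mathlib

/- Statement 8: for every closed expression, the lazy Krivine machine LK and
   its pointer-refined counterpart LK* (store-allocated continuations)
   operate in lock-step; the reachable state sets are isomorphic under the
   map that recursively dereferences continuation addresses through the
   store. -/

inductive Exp : Type
  | ref : String → Exp
  | lam : String → Exp → Exp
  | app : Exp → Exp → Exp
deriving DecidableEq

def Exp.fv : Exp → List String
  | .ref x => [x]
  | .lam x e => e.fv.filter (· ≠ x)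
  | .app e₀ e₁ => e₀.fv ++ e₁.fv

def Exp.Closed (e : Exp) : Prop := e.fv = []

abbrev Addr := ℕ
abbrev Env := List (String × Addr)

/- The LK machine: storables are delayed or computed closures; continuations
   are inductive. -/

inductive LKont : Type
  | mt
  | c₁ (a : Addr) (κ : LKont)
  | c₂ (a : Addr) (κ : LKont)

inductive LSto : Type
  | delayed (e : Exp) (ρ : Env)
  | computed (v : Exp) (ρ : Env)

abbrev LStore := List (Addr × LSto)
abbrev LKState := Exp × Env × LStore × LKont

inductive LKStep : LKState → LKState → Prop
  | varDelayed {x ρ σ κ a e ρ'} :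
      List.lookup x ρ = some a → List.lookup a σ = some (.delayed e ρ') →
      LKStep (.ref x, ρ, σ, κ) (e, ρ', σ, .c₁ a κ)
  | varComputed {x ρ σ κ a v ρ'} :
      List.lookup x ρ = some a → List.lookup a σ = some (.computed v ρ') →
      LKStep (.ref x, ρ, σ, κ) (v, ρ', σ, κ)
  | app {e₀ e₁ ρ σ κ} {a : Addr} :
      List.lookup a σ = none →
      LKStep (.app e₀ e₁, ρ, σ, κ)
        (e₀, ρ, (a, .delayed e₁ ρ) :: σ, .c₂ a κ)
  | update {x e ρ σ a κ} :
      LKStep (.lam x e, ρ, σ, .c₁ a κ)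
        (.lam x e, ρ, (a, .computed (.lam x e) ρ) :: σ, κ)
  | beta {x e ρ σ a κ} :
      LKStep (.lam x e, ρ, σ, .c₂ a κ) (e, (x, a) :: ρ, σ, κ)

def injLK (e : Exp) : LKState := (e, [], [], .mt)

/- The LK* machine: the continuation argument of c₁ and c₂ is replaced by a
   store address, and storables are extended to include continuations. -/

inductive PKont : Type
  | mt
  | c₁ (a : Addr) (b : Addr)
  | c₂ (a : Addr) (b : Addr)

inductive PSto : Type
  | delayed (e : Exp) (ρ : Env)
  | computed (v : Exp) (ρ : Env)
  | kont (κ : PKont)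

abbrev PStore := List (Addr × PSto)
abbrev LKPState := Exp × Env × PStore × PKont

inductive LKPStep : LKPState → LKPState → Prop
  | varDelayed {x ρ σ κ a e ρ'} {b : Addr} :
      List.lookup x ρ = some a → List.lookup a σ = some (.delayed e ρ') →
      List.lookup b σ = none →
      LKPStep (.ref x, ρ, σ, κ) (e, ρ', (b, .kont κ) :: σ, .c₁ a b)
  | varComputed {x ρ σ κ a v ρ'} :
      List.lookup x ρ = some a → List.lookup a σ = some (.computed v ρ') →
      LKPStep (.ref x, ρ, σ, κ) (v, ρ', σ, κ)
  | app {e₀ e₁ ρ σ κ} {a b : Addr} :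
      List.lookup a σ = none → List.lookup b σ = none → a ≠ b →
      LKPStep (.app e₀ e₁, ρ, σ, κ)
        (e₀, ρ, (b, .kont κ) :: (a, .delayed e₁ ρ) :: σ, .c₂ a b)
  | update {x e ρ σ a b κ} :
      List.lookup b σ = some (.kont κ) →
      LKPStep (.lam x e, ρ, σ, .c₁ a b)
        (.lam x e, ρ, (a, .computed (.lam x e) ρ) :: σ, κ)
  | beta {x e ρ σ a b κ} :
      List.lookup b σ = some (.kont κ) →
      LKPStep (.lam x e, ρ, σ, .c₂ a b) (e, (x, a) :: ρ, σ, κ)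

def injLKP (e : Exp) : LKPState := (e, [], [], .mt)

/-- Unfolding an LK* continuation into an LK continuation by recursively
    dereferencing continuation addresses through the store. -/
inductive Unfold (σ : PStore) : PKont → LKont → Prop
  | mt : Unfold σ .mt .mt
  | c₁ {a b κ' κc} :
      List.lookup b σ = some (.kont κ') → Unfold σ κ' κc →
      Unfold σ (.c₁ a b) (.c₁ a κc)
  | c₂ {a b κ' κc} :
      List.lookup b σ = some (.kont κ') → Unfold σ κ' κc →
      Unfold σ (.c₂ a b) (.c₂ a κc)

/-- Correspondence: same control and environment, the LK store is the
    delayed/computed part of the LK* store, and the LK continuation is the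
    unfolding of the LK* continuation. -/
def Corr : LKPState → LKState → Prop
  | (e, ρ, σ, κ), (e', ρ', σ', κ') =>
      e = e' ∧ ρ = ρ' ∧
      (∀ (a : Addr) (d : Exp) (ρd : Env),
        (List.lookup a σ' = some (.delayed d ρd) ↔
          List.lookup a σ = some (.delayed d ρd)) ∧
        (List.lookup a σ' = some (.computed d ρd) ↔
          List.lookup a σ = some (.computed d ρd))) ∧
      Unfold σ κ κ'

/-- Exactly-n-step iteration of a relation. -/
def StepN {α : Type _} (r : α → α → Prop) : ℕ → α → α → Prop
  | 0, a, b => a = b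
  | n + 1, a, b => ∃ c, r a c ∧ StepN r n c b

/-
Both directions are step-by-step simulations. LK* only adds continuation cells to the store, so
its delayed/computed cells are exactly those of the LK store, and cells at fresh addresses do not
disturb the unfolding of a continuation. Two invariants carry the induction. The frame addresses
of an LK continuation are always allocated, so the cell overwritten by an update is never a
continuation cell. And when LK* follows a given LK run, it places its continuation cells outside
the finite set of addresses that the whole run allocates, so every later LK allocation is still
free in the LK* store.
-/

theorem StepN.of_target {α : Type*} {r : α → α → Prop} {P : α → Prop}
    (hP : ∀ a a', r a a' → P a' → P a) :
    ∀ {n : ℕ} {a a' : α}, StepN r n a a' → P a' → P a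
  | 0, _, _, rfl, h => h
  | _ + 1, _, _, ⟨_, hr, hn⟩, h => hP _ _ hr (StepN.of_target hP hn h)

theorem StepN.simulate {α β : Type*} {r : α → α → Prop} {s : β → β → Prop}
    (R : α → β → Prop) (P : α → Prop) (hP : ∀ a a', r a a' → P a' → P a)
    (hsim : ∀ a a' b, r a a' → P a' → R a b → ∃ b', s b b' ∧ R a' b') :
    ∀ {n : ℕ} {a a' : α} {b : β}, StepN r n a a' → P a' → R a b →
      ∃ b', StepN s n b b' ∧ R a' b'
  | 0, _, _, b, rfl, _, hR => ⟨b, rfl, hR⟩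
  | _ + 1, _, _, _, ⟨_, hr, hn⟩, hPa', hR => by
    obtain ⟨c, hs, hRc⟩ := hsim _ _ _ hr (StepN.of_target hP hn hPa') hR
    obtain ⟨b', hsn, hR'⟩ := StepN.simulate R P hP hsim hn hPa' hRc
    exact ⟨b', ⟨c, hs, hsn⟩, hR'⟩

namespace List

variable {α β : Type*} [DecidableEq α]

theorem lookup_cons_eq_ite (a k : α) (v : β) (l : List (α × β)) :
    ((k, v) :: l).lookup a = if a = k then some v else l.lookup a := by
  simp only [lookup_cons]
  split <;> simp_all

theorem lookup_cons_of_ne {a k : α} (v : β) {l : List (α × β)} (h : a ≠ k) :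
    ((k, v) :: l).lookup a = l.lookup a := by
  simp [lookup_cons_eq_ite, h]

theorem lookup_eq_none_of_notMem {a : α} {l : List (α × β)} (h : a ∉ l.map Prod.fst) :
    l.lookup a = none := by
  simp only [lookup_eq_none_iff, bne_iff_ne]
  rintro ⟨k, v⟩ hkv rfl
  exact h (mem_map_of_mem hkv)

theorem exists_lookup_eq_none_notMem [Infinite α] (l : List (α × β)) (K : Finset α) :
    ∃ a, l.lookup a = none ∧ a ∉ K := by
  obtain ⟨a, ha⟩ := Infinite.exists_notMem_finset (K ∪ (l.map Prod.fst).toFinset)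
  simp only [Finset.mem_union, mem_toFinset, not_or] at ha
  exact ⟨a, lookup_eq_none_of_notMem ha.2, ha.1⟩

end List

open List

def LSto.toPSto : LSto → PSto
  | .delayed e ρ => .delayed e ρ
  | .computed v ρ => .computed v ρ

theorem LSto.toPSto_injective : Function.Injective LSto.toPSto := by
  rintro (_ | _) (_ | _) h <;> cases h <;> rfl

theorem LSto.toPSto_ne_kont (d : LSto) (κ : PKont) : d.toPSto ≠ .kont κ := by
  cases d <;> nofun

def StoreAgree (σp : PStore) (σ : LStore) : Prop :=
  ∀ (a : Addr) (d : LSto), σ.lookup a = some d ↔ σp.lookup a = some d.toPSto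

theorem corr_iff {e e' : Exp} {ρ ρ' : Env} {σp : PStore} {σ : LStore} {κp : PKont} {κ : LKont} :
    Corr (e, ρ, σp, κp) (e', ρ', σ, κ) ↔
      e = e' ∧ ρ = ρ' ∧ StoreAgree σp σ ∧ Unfold σp κp κ := by
  refine and_congr_right' (and_congr_right' (and_congr_left' ⟨fun h a d => ?_, fun h a d ρd => ?_⟩))
  · cases d with
    | delayed d ρd => exact (h a d ρd).1
    | computed d ρd => exact (h a d ρd).2
  · exact ⟨h a (.delayed d ρd), h a (.computed d ρd)⟩

namespace StoreAgree

variable {σp : PStore} {σ : LStore}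

theorem lookup_eq_none (h : StoreAgree σp σ) {a : Addr} (ha : σp.lookup a = none) :
    σ.lookup a = none := by
  cases hσ : σ.lookup a with
  | none => rfl
  | some d => simp [(h a d).mp hσ] at ha

theorem lookup_ne_kont (h : StoreAgree σp σ) {a : Addr} (ha : σ.lookup a ≠ none) (κ : PKont) :
    σp.lookup a ≠ some (.kont κ) := by
  obtain ⟨d, hd⟩ := Option.ne_none_iff_exists'.mp ha
  rw [(h a d).mp hd]
  simpa using d.toPSto_ne_kont κ

theorem lookup_eq_none_of_ne_kont (h : StoreAgree σp σ) {a : Addr} (ha : σ.lookup a = none)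
    (hk : ∀ κ, σp.lookup a ≠ some (.kont κ)) : σp.lookup a = none := by
  cases hσp : σp.lookup a with
  | none => rfl
  | some d =>
    cases d with
    | delayed e ρ => simp [(h a (.delayed e ρ)).mpr hσp] at ha
    | computed v ρ => simp [(h a (.computed v ρ)).mpr hσp] at ha
    | kont κ => exact absurd hσp (hk κ)

theorem cons (h : StoreAgree σp σ) (a : Addr) (d : LSto) :
    StoreAgree ((a, d.toPSto) :: σp) ((a, d) :: σ) := by
  intro x d'
  by_cases hx : x = a
  · simp [hx, LSto.toPSto_injective.eq_iff]
  · simp only [lookup_cons_of_ne _ hx, h x d']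

theorem cons_kont (h : StoreAgree σp σ) {b : Addr} (hb : σp.lookup b = none) (κ : PKont) :
    StoreAgree ((b, .kont κ) :: σp) σ := by
  intro x d
  by_cases hx : x = b
  · subst hx
    simp [h.lookup_eq_none hb, (d.toPSto_ne_kont κ).symm]
  · simp only [lookup_cons_of_ne _ hx, h x d]

end StoreAgree

theorem Unfold.cons {σp : PStore} {κp : PKont} {κ : LKont} (h : Unfold σp κp κ) {a : Addr}
    (ha : ∀ κ', σp.lookup a ≠ some (.kont κ')) (d : PSto) :
    Unfold ((a, d) :: σp) κp κ := by
  have hb : ∀ {b κ'}, σp.lookup b = some (.kont κ') → ((a, d) :: σp).lookup b = some (.kont κ') :=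
    fun {b κ'} hb => by
      rwa [lookup_cons_of_ne _ (by rintro rfl; exact ha κ' hb)]
  induction h with
  | mt => exact .mt
  | c₁ hl _ ih => exact .c₁ (hb hl) ih
  | c₂ hl _ ih => exact .c₂ (hb hl) ih

def KontCellsOutside (K : Finset Addr) (σp : PStore) : Prop :=
  ∀ b κ, σp.lookup b = some (.kont κ) → b ∉ K

namespace KontCellsOutside

variable {K : Finset Addr} {σp : PStore}

theorem cons (h : KontCellsOutside K σp) (a : Addr) (d : LSto) :
    KontCellsOutside K ((a, d.toPSto) :: σp) := by
  intro b κ hb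
  by_cases hba : b = a
  · simp [hba, d.toPSto_ne_kont κ] at hb
  · exact h b κ (by rwa [lookup_cons_of_ne _ hba] at hb)

theorem cons_kont (h : KontCellsOutside K σp) {b : Addr} (hb : b ∉ K) (κ : PKont) :
    KontCellsOutside K ((b, .kont κ) :: σp) := by
  intro b' κ' hb'
  by_cases hbb : b' = b
  · exact hbb ▸ hb
  · exact h b' κ' (by rwa [lookup_cons_of_ne _ hbb] at hb')

end KontCellsOutside

def LKont.addrs : LKont → List Addr
  | .mt => []
  | .c₁ a κ => a :: κ.addrs
  | .c₂ a κ => a :: κ.addrs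

def FramesAllocated : LKState → Prop
  | (_, _, σ, κ) => ∀ a ∈ κ.addrs, σ.lookup a ≠ none

theorem LKStep.lookup_ne_none {ς ς' : LKState} (h : LKStep ς ς') {a : Addr}
    (ha : ς.2.2.1.lookup a ≠ none) : ς'.2.2.1.lookup a ≠ none := by
  cases h <;> simp only [lookup_cons_eq_ite] <;> first | exact ha | (split <;> simp_all)

theorem LKStep.framesAllocated {ς ς' : LKState} (h : LKStep ς ς') (hς : FramesAllocated ς) :
    FramesAllocated ς' := by
  have grow := fun a ha => h.lookup_ne_none (a := a) ha
  cases h with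
  | varDelayed _ hσ =>
    rintro a (_ | ⟨_, ha⟩)
    exacts [by simp [hσ], hς a ha]
  | varComputed => exact hς
  | app =>
    rintro a (_ | ⟨_, ha⟩)
    exacts [by simp, grow a (hς a ha)]
  | update => exact fun a ha => grow a (hς a (.tail _ ha))
  | beta => exact fun a ha => hς a (.tail _ ha)

theorem LKPStep.exists_lkStep {ςp ςp' : LKPState} {ς : LKState} (h : LKPStep ςp ςp')
    (hc : Corr ςp ς) (hς : FramesAllocated ς) : ∃ ς', LKStep ς ς' ∧ Corr ςp' ς' := by
  obtain ⟨e, ρ, σ, κ⟩ := ς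
  cases h with
  | varDelayed hx hσa hb =>
    obtain ⟨rfl, rfl, hσ, hκ⟩ := corr_iff.mp hc
    refine ⟨_, .varDelayed hx ((hσ _ (.delayed _ _)).mpr hσa), corr_iff.mpr
      ⟨rfl, rfl, hσ.cons_kont hb _, .c₁ lookup_cons_self (hκ.cons (by simp [hb]) _)⟩⟩
  | varComputed hx hσa =>
    obtain ⟨rfl, rfl, hσ, hκ⟩ := corr_iff.mp hc
    exact ⟨_, .varComputed hx ((hσ _ (.computed _ _)).mpr hσa), corr_iff.mpr ⟨rfl, rfl, hσ, hκ⟩⟩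
  | @app e₀ e₁ ρ σp κp a b ha hb hab =>
    obtain ⟨rfl, rfl, hσ, hκ⟩ := corr_iff.mp hc
    have hb' : ((a, PSto.delayed e₁ ρ) :: σp).lookup b = none := by
      rwa [lookup_cons_of_ne _ (Ne.symm hab)]
    refine ⟨_, .app (hσ.lookup_eq_none ha), corr_iff.mpr ⟨rfl, rfl,
      (hσ.cons a (.delayed e₁ ρ)).cons_kont hb' _,
      .c₂ lookup_cons_self ((hκ.cons (by simp [ha]) _).cons (by simp [hb']) _)⟩⟩
  | update hb =>
    obtain ⟨rfl, rfl, hσ, hκ⟩ := corr_iff.mp hc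
    obtain _ | ⟨hb', hκ'⟩ := hκ
    obtain rfl : _ = _ := PSto.kont.inj (Option.some.inj (hb'.symm.trans hb))
    have ha := hσ.lookup_ne_kont (hς _ (.head _))
    exact ⟨_, .update, corr_iff.mpr ⟨rfl, rfl, hσ.cons _ (.computed _ _), hκ'.cons ha _⟩⟩
  | beta hb =>
    obtain ⟨rfl, rfl, hσ, hκ⟩ := corr_iff.mp hc
    obtain _ | _ | ⟨hb', hκ'⟩ := hκ
    obtain rfl : _ = _ := PSto.kont.inj (Option.some.inj (hb'.symm.trans hb))
    exact ⟨_, .beta, corr_iff.mpr ⟨rfl, rfl, hσ, hκ'⟩⟩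

theorem LKStep.exists_lkpStep {K : Finset Addr} {ς ς' : LKState} {ςp : LKPState}
    (h : LKStep ς ς') (hK : ∀ a, ς'.2.2.1.lookup a ≠ none → a ∈ K) (hc : Corr ςp ς)
    (hς : FramesAllocated ς) (hout : KontCellsOutside K ςp.2.2.1) :
    ∃ ςp', LKPStep ςp ςp' ∧ Corr ςp' ς' ∧ KontCellsOutside K ςp'.2.2.1 := by
  obtain ⟨e, ρ, σp, κp⟩ := ςp
  cases h with
  | varDelayed hx hσa =>
    obtain ⟨rfl, rfl, hσ, hκ⟩ := corr_iff.mp hc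
    obtain ⟨b, hb, hbK⟩ := exists_lookup_eq_none_notMem σp K
    exact ⟨_, .varDelayed hx ((hσ _ (.delayed _ _)).mp hσa) hb, corr_iff.mpr
      ⟨rfl, rfl, hσ.cons_kont hb _, .c₁ lookup_cons_self (hκ.cons (by simp [hb]) _)⟩,
      hout.cons_kont hbK _⟩
  | varComputed hx hσa =>
    obtain ⟨rfl, rfl, hσ, hκ⟩ := corr_iff.mp hc
    exact ⟨_, .varComputed hx ((hσ _ (.computed _ _)).mp hσa), corr_iff.mpr ⟨rfl, rfl, hσ, hκ⟩,
      hout⟩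
  | @app e₀ e₁ ρ σ κ a ha =>
    obtain ⟨rfl, rfl, hσ, hκ⟩ := corr_iff.mp hc
    have haK : a ∈ K := hK a (by simp)
    have ha' : σp.lookup a = none :=
      hσ.lookup_eq_none_of_ne_kont ha fun κ' hκ' => hout a κ' hκ' haK
    obtain ⟨b, hb, hbK⟩ := exists_lookup_eq_none_notMem σp K
    have hab : a ≠ b := by rintro rfl; exact hbK haK
    have hb' : ((a, PSto.delayed e₁ ρ) :: σp).lookup b = none := by
      rwa [lookup_cons_of_ne _ (Ne.symm hab)]
    exact ⟨_, .app ha' hb hab, corr_iff.mpr ⟨rfl, rfl,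
      (hσ.cons a (.delayed e₁ ρ)).cons_kont hb' _,
      .c₂ lookup_cons_self ((hκ.cons (by simp [ha']) _).cons (by simp [hb']) _)⟩,
      (hout.cons a (.delayed e₁ ρ)).cons_kont hbK _⟩
  | update =>
    obtain ⟨rfl, rfl, hσ, hκ⟩ := corr_iff.mp hc
    obtain _ | ⟨hb, hκ'⟩ := hκ
    have ha := hσ.lookup_ne_kont (hς _ (.head _))
    exact ⟨_, .update hb, corr_iff.mpr ⟨rfl, rfl, hσ.cons _ (.computed _ _), hκ'.cons ha _⟩,
      hout.cons _ (.computed _ _)⟩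
  | beta =>
    obtain ⟨rfl, rfl, hσ, hκ⟩ := corr_iff.mp hc
    obtain _ | _ | ⟨hb, hκ'⟩ := hκ
    exact ⟨_, .beta hb, corr_iff.mpr ⟨rfl, rfl, hσ, hκ'⟩, hout⟩

theorem corr_injLKP_injLK (e : Exp) : Corr (injLKP e) (injLK e) :=
  corr_iff.mpr ⟨rfl, rfl, fun _ _ => by simp, .mt⟩

theorem lk_lkstar_lockstep_general (e : Exp) (n : ℕ) :
    (∀ ς : LKState, StepN LKStep n (injLK e) ς →
      ∃ ςp : LKPState, StepN LKPStep n (injLKP e) ςp ∧ Corr ςp ς) ∧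
    (∀ ςp : LKPState, StepN LKPStep n (injLKP e) ςp →
      ∃ ς : LKState, StepN LKStep n (injLK e) ς ∧ Corr ςp ς) := by
  have hinit : FramesAllocated (injLK e) := nofun
  constructor
  · intro ς hrun
    let K := (ς.2.2.1.map Prod.fst).toFinset
    have hK : ∀ a, ς.2.2.1.lookup a ≠ none → a ∈ K := fun a ha =>
      mem_toFinset.mpr (not_not.mp (mt lookup_eq_none_of_notMem ha))
    obtain ⟨ςp, hrunp, hc, -⟩ := StepN.simulate
      (fun ς ςp => Corr ςp ς ∧ FramesAllocated ς ∧ KontCellsOutside K ςp.2.2.1)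
      (fun ς => ∀ a, ς.2.2.1.lookup a ≠ none → a ∈ K)
      (fun _ _ h hK' a ha => hK' a (h.lookup_ne_none ha))
      (fun _ _ _ h hK' ⟨hc, hς, hout⟩ => by
        obtain ⟨ςp', hp, hc', hout'⟩ := h.exists_lkpStep hK' hc hς hout
        exact ⟨ςp', hp, hc', h.framesAllocated hς, hout'⟩)
      hrun hK ⟨corr_injLKP_injLK e, hinit, nofun⟩
    exact ⟨ςp, hrunp, hc⟩
  · intro ςp hrunp
    obtain ⟨ς, hrun, hc, -⟩ := StepN.simulate
      (fun ςp ς => Corr ςp ς ∧ FramesAllocated ς) (fun _ => True) (fun _ _ _ _ => trivial)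
      (fun _ _ _ h _ ⟨hc, hς⟩ => by
        obtain ⟨ς', hs, hc'⟩ := h.exists_lkStep hc hς
        exact ⟨ς', hs, hc', hs.framesAllocated hς⟩)
      hrunp trivial ⟨corr_injLKP_injLK e, hinit⟩
    exact ⟨ς, hrun, hc⟩

theorem lk_lkstar_lockstep (e : Exp) (he : e.Closed) (n : ℕ) :
    (∀ ς : LKState, StepN LKStep n (injLK e) ς →
      ∃ ςp : LKPState, StepN LKPStep n (injLKP e) ςp ∧ Corr ςp ς) ∧
    (∀ ςp : LKPState, StepN LKPStep n (injLKP e) ςp →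
      ∃ ς : LKState, StepN LKStep n (injLK e) ς ∧ Corr ςp ς) :=
  lk_lkstar_lockstep_general e n
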